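/- Truncation lemma: if X̂_n = Ô_P(Y_n; r_n) and lim_{n→∞} r_n^{-1} log P(|X_n| ≥ |X̂_n|) = -∞, then X_n = Ô_P(Y_n; r_n). -/

import Mathlib

/-!
Split `{t |Y| ≤ |X|}` into `{t |Y| ≤ |X̂|}` and the truncation event `{|X̂| ≤ |X|}`. The first
has the required bound; for the second, the hypothesis applied with `M = f (C₂ + k)` gives a
bound `exp (-r_n f(C₂ + k))` from some index `N_k` on. A diagonal choice `k = K n` with
`K n → ∞` slowly enough that `n ≥ N_{K n}` then controls the truncation event for all
`t ≤ C₂ + K n`, and `min (R n) (C₂ + K n)` serves as the new range sequence.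
-/

open MeasureTheory

/-- `X_n = Ô_P(Y_n; r_n)`: there exist constants `C1, C2, N > 0`, a non-decreasing
`f : [C2, ∞) → (0, ∞)` with `f → ∞`, and a positive deterministic sequence `R_n → ∞`,
such that `P(|X_n| ≥ t |Y_n|) ≤ C1 exp(-r_n f(t))` for all `n ≥ N` and `C2 ≤ t ≤ R_n`. -/
def OhatP {Ω : Type*} [MeasurableSpace Ω] (μ : MeasureTheory.Measure Ω)
    (X Y : ℕ → Ω → ℝ) (r : ℕ → ℝ) : Prop :=
  ∃ C1 C2 N : ℝ, 0 < C1 ∧ 0 < C2 ∧ 0 < N ∧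
    ∃ f : ℝ → ℝ,
      (∀ s t : ℝ, C2 ≤ s → s ≤ t → f s ≤ f t) ∧
      (∀ t : ℝ, C2 ≤ t → 0 < f t) ∧
      Filter.Tendsto f Filter.atTop Filter.atTop ∧
      ∃ R : ℕ → ℝ, (∀ n, 0 < R n) ∧ Filter.Tendsto R Filter.atTop Filter.atTop ∧
        ∀ n : ℕ, N ≤ (n : ℝ) → ∀ t : ℝ, C2 ≤ t → t ≤ R n →
          μ {ω | t * |Y n ω| ≤ |X n ω|} ≤ ENNReal.ofReal (C1 * Real.exp (-(r n) * f t))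

open Filter

theorem Filter.exists_tendsto_atTop_eventually_diag {P : ℕ → ℕ → Prop}
    (h : ∀ k, ∀ᶠ n in atTop, P k n) :
    ∃ K : ℕ → ℕ, Tendsto K atTop atTop ∧ ∀ᶠ n in atTop, P (K n) n := by
  choose N hN using fun k => eventually_atTop.1 (h k)
  let K n := Nat.findGreatest (fun k => N k ≤ n) n
  refine ⟨K, tendsto_atTop.2 fun b => ?_, ?_⟩
  · filter_upwards [eventually_ge_atTop (max b (N b))] with n hn
    exact Nat.le_findGreatest (le_of_max_le_left hn) (le_of_max_le_right hn)
  · filter_upwards [eventually_ge_atTop (N 0)] with n hn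
    exact hN _ _ (Nat.findGreatest_spec (P := fun k => N k ≤ n) (Nat.zero_le n) hn)

theorem MeasureTheory.measure_setOf_le_le_add {Ω α : Type*} [MeasurableSpace Ω] [LinearOrder α]
    (μ : Measure Ω) (a b c : Ω → α) :
    μ {ω | a ω ≤ c ω} ≤ μ {ω | a ω ≤ b ω} + μ {ω | b ω ≤ c ω} := by
  refine (measure_mono fun ω (hω : a ω ≤ c ω) => ?_).trans (measure_union_le _ _)
  rcases le_total (a ω) (b ω) with hab | hba
  · exact Or.inl hab
  · exact Or.inr (hba.trans hω)

theorem stmt6_general {Ω : Type*} [MeasurableSpace Ω] (μ : Measure Ω)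
    (X Xhat Y : ℕ → Ω → ℝ) (r : ℕ → ℝ) (hr : ∀ n, 0 < r n)
    (hXhat : OhatP μ Xhat Y r)
    (htrunc : ∀ M : ℝ, ∃ N : ℕ, ∀ n : ℕ, N ≤ n →
      μ {ω | |Xhat n ω| ≤ |X n ω|} ≤ ENNReal.ofReal (Real.exp (-(M * r n)))) :
    OhatP μ X Y r := by
  obtain ⟨C1, C2, N, hC1, hC2, hN, f, hf_mono, hf_pos, hf_top, R, hR_pos, hR_top, hbound⟩ := hXhat
  obtain ⟨K, hK_top, hK⟩ := exists_tendsto_atTop_eventually_diag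
    fun k => eventually_atTop.2 (htrunc (f (C2 + k)))
  obtain ⟨N₀, hN₀⟩ := eventually_atTop.1 hK
  refine ⟨C1 + 1, C2, max N (N₀ + 1), by positivity, hC2, by positivity, f, hf_mono, hf_pos,
    hf_top, fun n => min (R n) (C2 + K n), fun n => lt_min (hR_pos n) (by positivity),
    tendsto_inf_atTop _ hR_top (tendsto_atTop_add_const_left _ _
      (tendsto_natCast_atTop_atTop.comp hK_top)), fun n hn t hC2t ht => ?_⟩
  have hn₀ : N₀ ≤ n := by
    exact_mod_cast (le_add_of_nonneg_right zero_le_one).trans ((le_max_right _ _).trans hn)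
  have htrunc_n : μ {ω | |Xhat n ω| ≤ |X n ω|} ≤ ENNReal.ofReal (Real.exp (-(r n) * f t)) := by
    have hft : f t ≤ f (C2 + K n) := hf_mono t _ hC2t (ht.trans (min_le_right _ _))
    refine (hN₀ n hn₀).trans (ENNReal.ofReal_le_ofReal (Real.exp_le_exp.2 ?_))
    nlinarith [hr n]
  calc μ {ω | t * |Y n ω| ≤ |X n ω|}
      ≤ μ {ω | t * |Y n ω| ≤ |Xhat n ω|} + μ {ω | |Xhat n ω| ≤ |X n ω|} :=
        measure_setOf_le_le_add μ _ _ _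
    _ ≤ ENNReal.ofReal (C1 * Real.exp (-(r n) * f t)) +
          ENNReal.ofReal (Real.exp (-(r n) * f t)) :=
        add_le_add (hbound n ((le_max_left _ _).trans hn) t hC2t (ht.trans (min_le_left _ _)))
          htrunc_n
    _ = ENNReal.ofReal ((C1 + 1) * Real.exp (-(r n) * f t)) := by
        rw [← ENNReal.ofReal_add (by positivity) (by positivity), add_mul, one_mul]

/-- Truncation: if `X̂_n = Ô_P(Y_n; r_n)` and `r_n⁻¹ log P(|X_n| ≥ |X̂_n|) → -∞`
(the latter expressed, with the convention `log 0 = -∞`, as: for every `M`, eventually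
`P(|X_n| ≥ |X̂_n|) ≤ exp(-M r_n)`), then `X_n = Ô_P(Y_n; r_n)`. -/
theorem stmt6 {Ω : Type*} [MeasurableSpace Ω] (μ : Measure Ω) [IsProbabilityMeasure μ]
    (X Xhat Y : ℕ → Ω → ℝ) (r : ℕ → ℝ) (hr : ∀ n, 0 < r n)
    (hXhat : OhatP μ Xhat Y r)
    (htrunc : ∀ M : ℝ, ∃ N : ℕ, ∀ n : ℕ, N ≤ n →
      μ {ω | |Xhat n ω| ≤ |X n ω|} ≤ ENNReal.ofReal (Real.exp (-(M * r n)))) :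
    OhatP μ X Y r :=
  stmt6_general μ X Xhat Y r hr hXhat htrunc
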